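/- Let a, b ≥ 0 be real numbers and set c = (a+b+1)/2. If (c−1)² ≤ 2ab, then for all real x, y ≥ 0, (x^c + y^c)² ≥ (x + y)(x^a y^b + y^a x^b). -/

import Mathlib

open Real

private lemma sinh_le_mul_cosh {x : ℝ} (hx : 0 ≤ x) : Real.sinh x ≤ x * Real.cosh x := by
  have hder : ∀ y : ℝ, HasDerivAt (fun t => t * Real.cosh t - Real.sinh t) (y * Real.sinh y) y := by
    intro y
    have h := ((hasDerivAt_id y).mul (Real.hasDerivAt_cosh y)).sub (Real.hasDerivAt_sinh y)
    refine h.congr_deriv ?_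
    simp only [id_eq]
    ring
  have hmono : MonotoneOn (fun t => t * Real.cosh t - Real.sinh t) (Set.Ici (0:ℝ)) := by
    apply monotoneOn_of_deriv_nonneg (convex_Ici 0)
    · exact fun y _ => (hder y).continuousAt.continuousWithinAt
    · exact fun y _ => ((hder y).differentiableAt).differentiableWithinAt
    · intro y hy
      rw [interior_Ici, Set.mem_Ioi] at hy
      rw [(hder y).deriv]
      exact mul_nonneg hy.le (Real.sinh_nonneg_iff.2 hy.le)
  have h0 := hmono (Set.self_mem_Ici) (Set.mem_Ici.2 hx) hx
  simp at h0
  linarith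

private lemma sinh_ratio {p r : ℝ} (hp : 0 ≤ p) (hpr : p ≤ r) :
    r * Real.sinh p ≤ p * Real.sinh r := by
  have h1 : Real.sinh r = Real.sinh p * Real.cosh (r - p) + Real.cosh p * Real.sinh (r - p) := by
    have e : r = p + (r - p) := by ring
    nth_rewrite 1 [e]
    exact Real.sinh_add p (r - p)
  have h2 : r - p ≤ Real.sinh (r - p) := Real.self_le_sinh_iff.2 (by linarith)
  have h3 : Real.sinh p ≤ p * Real.cosh p := sinh_le_mul_cosh hp
  have h4 : 1 ≤ Real.cosh (r - p) := Real.one_le_cosh _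
  have h5 : 0 ≤ Real.sinh p := Real.sinh_nonneg_iff.2 hp
  have h6 : 0 < Real.cosh p := Real.cosh_pos p
  nlinarith [mul_nonneg h5 (sub_nonneg.2 h4), mul_nonneg hp (mul_nonneg h6.le (sub_nonneg.2 h2)),
    mul_nonneg (sub_nonneg.2 hpr) (sub_nonneg.2 h3)]

private lemma key_cosh_nonneg {p q : ℝ} (hp : 0 ≤ p) (hq : 0 ≤ q) :
    Real.cosh p + Real.cosh q ≤ 1 + Real.cosh (Real.sqrt (p ^ 2 + q ^ 2)) := by
  rcases eq_or_lt_of_le hq with hq0 | hq0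
  · rw [← hq0]
    simp [Real.sqrt_sq hp]
    linarith [Real.one_le_cosh p]
  · set F : ℝ → ℝ := fun t => Real.cosh (Real.sqrt (t ^ 2 + q ^ 2)) - Real.cosh t with hF
    have hne : ∀ t : ℝ, t ^ 2 + q ^ 2 ≠ 0 := by
      intro t; positivity
    have hder : ∀ t : ℝ, HasDerivAt F
        (Real.sinh (Real.sqrt (t ^ 2 + q ^ 2)) * (1 / (2 * Real.sqrt (t ^ 2 + q ^ 2)) * (2 * t))
          - Real.sinh t) t := by
      intro t
      have h1 : HasDerivAt (fun s : ℝ => s ^ 2 + q ^ 2) (2 * t) t := by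
        simpa using (hasDerivAt_pow 2 t).add_const (q ^ 2)
      have h2 : HasDerivAt (fun s : ℝ => Real.sqrt (s ^ 2 + q ^ 2))
          (1 / (2 * Real.sqrt (t ^ 2 + q ^ 2)) * (2 * t)) t :=
        (Real.hasDerivAt_sqrt (hne t)).comp t h1
      exact ((Real.hasDerivAt_cosh _).comp t h2).sub (Real.hasDerivAt_cosh t)
    have hmono : MonotoneOn F (Set.Ici (0:ℝ)) := by
      apply monotoneOn_of_deriv_nonneg (convex_Ici 0)
      · exact fun y _ => (hder y).continuousAt.continuousWithinAt
      · exact fun y _ => ((hder y).differentiableAt).differentiableWithinAt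
      · intro y hy
        rw [interior_Ici, Set.mem_Ioi] at hy
        rw [(hder y).deriv]
        set r := Real.sqrt (y ^ 2 + q ^ 2) with hr
        have hrpos : 0 < r := Real.sqrt_pos.2 (by positivity)
        have hyr : y ≤ r := by
          rw [hr]
          have e : y = Real.sqrt (y ^ 2) := (Real.sqrt_sq hy.le).symm
          nth_rewrite 1 [e]
          exact Real.sqrt_le_sqrt (by nlinarith)
        have hratio := sinh_ratio hy.le hyr
        rw [sub_nonneg]
        have e2 : Real.sinh r * (1 / (2 * r) * (2 * y)) = y * Real.sinh r / r := by
          field_simp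
        rw [e2, le_div_iff₀ hrpos]
        linarith [hratio]
    have h0 := hmono (Set.self_mem_Ici) (Set.mem_Ici.2 hp) hp
    have hF0 : F 0 = Real.cosh q - 1 := by
      simp [hF, Real.sqrt_sq hq0.le]
    rw [hF0] at h0
    simp only [hF] at h0
    linarith

private lemma key_cosh (p q : ℝ) :
    Real.cosh p + Real.cosh q ≤ 1 + Real.cosh (Real.sqrt (p ^ 2 + q ^ 2)) := by
  have := key_cosh_nonneg (abs_nonneg p) (abs_nonneg q)
  rwa [Real.cosh_abs, Real.cosh_abs, sq_abs, sq_abs] at this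

private lemma exp_ineq (a b c : ℝ) (hc : c = (a + b + 1) / 2) (h : (c - 1) ^ 2 ≤ 2 * a * b)
    (S T : ℝ) :
    (Real.exp (c * S) + Real.exp (c * T)) ^ 2 ≥
      (Real.exp S + Real.exp T) * (Real.exp (a * S + b * T) + Real.exp (a * T + b * S)) := by
  obtain ⟨M, hM⟩ : ∃ M : ℝ, M = (S + T) / 2 := ⟨_, rfl⟩
  obtain ⟨w, hw⟩ : ∃ w : ℝ, w = (S - T) / 2 := ⟨_, rfl⟩
  have hS : S = M + w := by rw [hM, hw]; ring
  have hT : T = M + -w := by rw [hM, hw]; ring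
  -- cosh inequality
  have hcosh : Real.cosh w * Real.cosh ((a - b) * w) ≤ Real.cosh (c * w) ^ 2 := by
    have hkey := key_cosh (((a - b) + 1) * w) (((a - b) - 1) * w)
    have hcm : c - 1 = (a + b - 1) / 2 := by rw [hc]; ring
    have h' : ((a + b - 1) / 2) ^ 2 ≤ 2 * a * b := by rw [← hcm]; exact h
    have h4c : 4 * c ^ 2 = (a + b + 1) ^ 2 := by rw [hc]; ring
    have hcoef : 2 * (a - b) ^ 2 + 2 ≤ 4 * c ^ 2 := by
      rw [h4c]; nlinarith [h']
    have hsq : (((a - b) + 1) * w) ^ 2 + (((a - b) - 1) * w) ^ 2 ≤ (2 * c * w) ^ 2 := by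
      nlinarith [mul_le_mul_of_nonneg_right hcoef (sq_nonneg w)]
    have hsqrt : Real.sqrt ((((a - b) + 1) * w) ^ 2 + (((a - b) - 1) * w) ^ 2) ≤ |2 * c * w| := by
      rw [← Real.sqrt_sq_eq_abs]
      exact Real.sqrt_le_sqrt hsq
    have hmon : Real.cosh (Real.sqrt ((((a - b) + 1) * w) ^ 2 + (((a - b) - 1) * w) ^ 2))
        ≤ Real.cosh (2 * c * w) := by
      rw [Real.cosh_le_cosh]
      rwa [abs_of_nonneg (Real.sqrt_nonneg _)]
    have hprod : 2 * (Real.cosh w * Real.cosh ((a - b) * w)) =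
        Real.cosh (((a - b) + 1) * w) + Real.cosh (((a - b) - 1) * w) := by
      have e1 : ((a - b) + 1) * w = (a - b) * w + w := by ring
      have e2 : ((a - b) - 1) * w = (a - b) * w - w := by ring
      rw [e1, e2, Real.cosh_add, Real.cosh_sub]
      ring
    have hdouble : Real.cosh (2 * c * w) = 2 * Real.cosh (c * w) ^ 2 - 1 := by
      have e : 2 * c * w = c * w + c * w := by ring
      rw [e, Real.cosh_add]
      linarith [Real.cosh_sq (c * w)]
    linarith
  -- factorization
  have e1 : Real.exp (c * S) + Real.exp (c * T) = Real.exp (c * M) * (2 * Real.cosh (c * w)) := by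
    have g1 : c * S = c * M + c * w := by rw [hS]; ring
    have g2 : c * T = c * M + -(c * w) := by rw [hT]; ring
    rw [g1, g2, Real.exp_add, Real.exp_add, Real.cosh_eq]
    ring
  have e2 : Real.exp S + Real.exp T = Real.exp M * (2 * Real.cosh w) := by
    nth_rewrite 1 [hS]
    nth_rewrite 1 [hT]
    rw [Real.exp_add, Real.exp_add, Real.cosh_eq]
    ring
  have e3 : Real.exp (a * S + b * T) + Real.exp (a * T + b * S)
      = Real.exp ((a + b) * M) * (2 * Real.cosh ((a - b) * w)) := by
    have g1 : a * S + b * T = (a + b) * M + (a - b) * w := by rw [hS, hT]; ring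
    have g2 : a * T + b * S = (a + b) * M + -((a - b) * w) := by rw [hS, hT]; ring
    rw [g1, g2, Real.exp_add, Real.exp_add, Real.cosh_eq]
    ring
  rw [e1, e2, e3, ge_iff_le]
  have hexp : Real.exp M * Real.exp ((a + b) * M) = Real.exp (c * M) ^ 2 := by
    rw [sq, ← Real.exp_add, ← Real.exp_add]
    congr 1
    rw [hc]
    ring
  calc Real.exp M * (2 * Real.cosh w) * (Real.exp ((a + b) * M) * (2 * Real.cosh ((a - b) * w)))
      = (Real.exp M * Real.exp ((a + b) * M)) * (4 * (Real.cosh w * Real.cosh ((a - b) * w))) := by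
        ring
    _ ≤ (Real.exp M * Real.exp ((a + b) * M)) * (4 * Real.cosh (c * w) ^ 2) := by
        apply mul_le_mul_of_nonneg_left _ (by positivity)
        linarith
    _ = (Real.exp (c * M) * (2 * Real.cosh (c * w))) ^ 2 := by rw [hexp]; ring

private lemma zero_case (a b c : ℝ) (ha : 0 ≤ a) (hb : 0 ≤ b)
    (hc : c = (a + b + 1) / 2) (h : (c - 1) ^ 2 ≤ 2 * a * b) (x : ℝ) (hx : 0 ≤ x) :
    (x ^ c + (0:ℝ) ^ c) ^ 2 ≥ (x + 0) * (x ^ a * (0:ℝ) ^ b + (0:ℝ) ^ a * x ^ b) := by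
  have hcpos : 0 < c := by rw [hc]; linarith
  rw [Real.zero_rpow hcpos.ne']
  by_cases hb0 : b = 0
  · have hc1 : c = 1 := by
      subst hb0
      nlinarith [sq_nonneg (c - 1)]
    have ha1 : a = 1 := by rw [hc1, hb0] at hc; linarith
    subst hb0; subst ha1
    rw [hc1]
    simp only [Real.rpow_one, Real.rpow_zero, Real.zero_rpow one_ne_zero, add_zero, mul_one,
      zero_mul, mul_zero]
    nlinarith [sq_nonneg x]
  · by_cases ha0 : a = 0
    · have hc1 : c = 1 := by
        subst ha0
        nlinarith [sq_nonneg (c - 1)]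
      have hb1 : b = 1 := by rw [hc1, ha0] at hc; linarith
      subst ha0; subst hb1
      rw [hc1]
      simp only [Real.rpow_one, Real.rpow_zero, Real.zero_rpow one_ne_zero, add_zero, mul_one,
        one_mul, zero_mul, mul_zero, zero_add]
      nlinarith [sq_nonneg x]
    · rw [Real.zero_rpow ha0, Real.zero_rpow hb0]
      have e : (x + 0) * (x ^ a * 0 + 0 * x ^ b) = 0 := by ring
      rw [e]
      positivity

theorem two_var_cyclic_ineq (a b c : ℝ) (ha : 0 ≤ a) (hb : 0 ≤ b)
    (hc : c = (a + b + 1) / 2) (h : (c - 1) ^ 2 ≤ 2 * a * b) :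
    ∀ x y : ℝ, 0 ≤ x → 0 ≤ y →
      (x ^ c + y ^ c) ^ 2 ≥ (x + y) * (x ^ a * y ^ b + y ^ a * x ^ b) := by
  intro x y hx hy
  rcases eq_or_lt_of_le hx with hx0 | hx0
  · -- x = 0
    have hc' : c = (b + a + 1) / 2 := by rw [hc]; ring_nf
    have h' : (c - 1) ^ 2 ≤ 2 * b * a := by nlinarith [h]
    have hz := zero_case b a c hb ha hc' h' y hy
    rw [← hx0]
    nlinarith [hz]
  · rcases eq_or_lt_of_le hy with hy0 | hy0
    · -- y = 0
      have hz := zero_case a b c ha hb hc h x hx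
      rw [← hy0]
      nlinarith [hz]
    · -- both positive
      set S := Real.log x with hS
      set T := Real.log y with hT
      have ex : x = Real.exp S := (Real.exp_log hx0).symm
      have ey : y = Real.exp T := (Real.exp_log hy0).symm
      have rxc : x ^ c = Real.exp (c * S) := by
        rw [Real.rpow_def_of_pos hx0, mul_comm]
      have ryc : y ^ c = Real.exp (c * T) := by
        rw [Real.rpow_def_of_pos hy0, mul_comm]
      have rxa : x ^ a = Real.exp (a * S) := by
        rw [Real.rpow_def_of_pos hx0, mul_comm]
      have ryb : y ^ b = Real.exp (b * T) := by
        rw [Real.rpow_def_of_pos hy0, mul_comm]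
      have rya : y ^ a = Real.exp (a * T) := by
        rw [Real.rpow_def_of_pos hy0, mul_comm]
      have rxb : x ^ b = Real.exp (b * S) := by
        rw [Real.rpow_def_of_pos hx0, mul_comm]
      rw [rxc, ryc, rxa, ryb, rya, rxb]
      nth_rewrite 1 [ex]
      rw [ey]
      rw [← Real.exp_add, ← Real.exp_add]
      have hmain := exp_ineq a b c hc h S T
      exact hmain
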